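/- arXiv:1709.00448 — 6 statements merged into one kernel-verified Lean document; each statement's English description precedes it below -/
import Mathlib

section
/- For every real λ ≥ 0 and every 0 < s < 1, the integral ∫_0^∞ (e^{-tλ} − 1) t^{-1-s} dt converges absolutely and λ^s = (1/Γ(-s)) ∫_0^∞ (e^{-tλ} − 1) t^{-1-s} dt. -/
/-!
Integrate by parts against `v t = -t ^ (-s) / s`, whose derivative is `t ^ (-1 - s)`. The boundary
term `(e^{-tλ} - 1) t^{-s}` vanishes at both ends because `|e^{-tλ} - 1| ≤ min (tλ) 1`, which is
also what makes the integral converge absolutely. What remains is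
`-(λ / s) ∫ t^{-s} e^{-λt} dt = -(λ / s) λ^{s-1} Γ(1 - s) = λ^s Γ(-s)`, by `Γ(1 - s) = -s Γ(-s)`.
-/

open MeasureTheory Set Filter Real Topology

lemma abs_exp_neg_sub_one_le_self {x : ℝ} (hx : 0 ≤ x) : |exp (-x) - 1| ≤ x := by
  rw [abs_sub_comm, abs_of_nonneg (by simpa using hx)]
  linarith [one_sub_le_exp_neg x]

lemma abs_exp_neg_sub_one_le_one {x : ℝ} (hx : 0 ≤ x) : |exp (-x) - 1| ≤ 1 := by
  rw [abs_sub_comm, abs_of_nonneg (by simpa using hx)]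
  linarith [exp_pos (-x)]

lemma Real.Gamma_one_sub {s : ℝ} (hs : s ≠ 0) : Gamma (1 - s) = -s * Gamma (-s) := by
  rw [sub_eq_neg_add, Gamma_add_one (neg_ne_zero.mpr hs)]

lemma Real.Gamma_neg_lt_zero {s : ℝ} (hs0 : 0 < s) (hs1 : s < 1) : Gamma (-s) < 0 := by
  have h := Gamma_one_sub hs0.ne'
  have hpos := Gamma_pos_of_pos (show 0 < 1 - s by linarith)
  nlinarith

section

variable {lam s t : ℝ}

lemma norm_exp_neg_mul_sub_one_mul_rpow_eq (ht : 0 < t) (r : ℝ) :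
    ‖(exp (-t * lam) - 1) * t ^ r‖ = |exp (-(t * lam)) - 1| * t ^ r := by
  rw [norm_mul, norm_eq_abs, norm_of_nonneg (rpow_nonneg ht.le _), neg_mul]

lemma norm_exp_neg_mul_sub_one_mul_rpow_le_mul (hlam : 0 ≤ lam) (ht : 0 < t) (r : ℝ) :
    ‖(exp (-t * lam) - 1) * t ^ r‖ ≤ lam * t ^ (1 + r) := by
  rw [norm_exp_neg_mul_sub_one_mul_rpow_eq ht, rpow_add ht, rpow_one]
  calc |exp (-(t * lam)) - 1| * t ^ r ≤ t * lam * t ^ r := by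
        gcongr
        exact abs_exp_neg_sub_one_le_self (mul_nonneg ht.le hlam)
    _ = lam * (t * t ^ r) := by ring

lemma norm_exp_neg_mul_sub_one_mul_rpow_le (hlam : 0 ≤ lam) (ht : 0 < t) (r : ℝ) :
    ‖(exp (-t * lam) - 1) * t ^ r‖ ≤ t ^ r := by
  rw [norm_exp_neg_mul_sub_one_mul_rpow_eq ht]
  exact mul_le_of_le_one_left (rpow_nonneg ht.le _)
    (abs_exp_neg_sub_one_le_one (mul_nonneg ht.le hlam))

lemma integrableOn_exp_neg_mul_sub_one_mul_rpow (hlam : 0 ≤ lam) (hs0 : 0 < s) (hs1 : s < 1) :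
    IntegrableOn (fun t : ℝ => (exp (-t * lam) - 1) * t ^ (-1 - s)) (Ioi 0) := by
  have hmeas : AEStronglyMeasurable (fun t : ℝ => (exp (-t * lam) - 1) * t ^ (-1 - s)) := by
    fun_prop
  rw [← Ioc_union_Ioi_eq_Ioi zero_le_one, integrableOn_union]
  constructor
  · have hdom : IntegrableOn (fun t : ℝ => lam * t ^ (1 + (-1 - s))) (Ioc 0 1) :=
      ((intervalIntegrable_iff_integrableOn_Ioc_of_le zero_le_one).mp
        (intervalIntegral.intervalIntegrable_rpow' (by linarith))).const_mul lam
    exact hdom.mono' hmeas.restrict (ae_restrict_of_forall_mem measurableSet_Ioc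
      fun _ ht => norm_exp_neg_mul_sub_one_mul_rpow_le_mul hlam ht.1 _)
  · exact (integrableOn_Ioi_rpow_of_lt (show -1 - s < -1 by linarith) zero_lt_one).mono'
      hmeas.restrict (ae_restrict_of_forall_mem measurableSet_Ioi
        fun _ ht => norm_exp_neg_mul_sub_one_mul_rpow_le hlam (zero_lt_one.trans ht) _)

lemma tendsto_exp_neg_mul_sub_one_mul_rpow_nhdsGT_zero (hlam : 0 ≤ lam) (hs1 : s < 1) :
    Tendsto (fun t : ℝ => (exp (-t * lam) - 1) * t ^ (-s)) (𝓝[>] 0) (𝓝 0) := by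
  have hlim : Tendsto (fun t : ℝ => lam * t ^ (1 + -s)) (𝓝[>] 0) (𝓝 0) := by
    have := (continuousAt_rpow_const 0 (1 + -s) (Or.inr (by linarith))).tendsto.const_mul lam
    simpa [zero_rpow (show 1 + -s ≠ 0 by linarith)] using this.mono_left nhdsWithin_le_nhds
  exact squeeze_zero_norm' (eventually_nhdsWithin_of_forall
    fun _ ht => norm_exp_neg_mul_sub_one_mul_rpow_le_mul hlam ht _) hlim

lemma tendsto_exp_neg_mul_sub_one_mul_rpow_atTop (hlam : 0 ≤ lam) (hs0 : 0 < s) :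
    Tendsto (fun t : ℝ => (exp (-t * lam) - 1) * t ^ (-s)) atTop (𝓝 0) :=
  squeeze_zero_norm' ((eventually_gt_atTop 0).mono
    fun _ ht => norm_exp_neg_mul_sub_one_mul_rpow_le hlam ht _) (tendsto_rpow_neg_atTop hs0)

lemma integral_exp_neg_mul_sub_one_mul_rpow_eq_neg_mul_integral (hlam : 0 < lam) (hs0 : 0 < s)
    (hs1 : s < 1) :
    ∫ t in Ioi 0, (exp (-t * lam) - 1) * t ^ (-1 - s) =
      -(lam / s * ∫ t in Ioi 0, t ^ (1 - s - 1) * exp (-(lam * t))) := by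
  set u : ℝ → ℝ := fun t => exp (-t * lam) - 1 with hu_def
  set v : ℝ → ℝ := fun t => -t ^ (-s) / s with hv_def
  have hu : ∀ t ∈ Ioi (0 : ℝ), HasDerivAt u (-lam * exp (-t * lam)) t := fun t _ =>
    (((hasDerivAt_neg t).mul_const lam).exp.sub_const 1).congr_deriv (by ring)
  have hv : ∀ t ∈ Ioi (0 : ℝ), HasDerivAt v (t ^ (-1 - s)) t := fun t (ht : 0 < t) => by
    refine ((hasDerivAt_rpow_const (Or.inl ht.ne')).neg.div_const s).congr_deriv ?_
    rw [show -s - 1 = -1 - s by ring]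
    field_simp
  have hu'v : (fun t => -lam * exp (-t * lam) * v t) =
      fun t => lam / s * (t ^ (1 - s - 1) * exp (-(lam * t))) := by
    ext t
    rw [hv_def, sub_sub_cancel_left, show -(lam * t) = -t * lam by ring]
    ring
  have hE : IntegrableOn (fun t : ℝ => t ^ (1 - s - 1) * exp (-(lam * t))) (Ioi 0) := by
    refine .of_integral_ne_zero ?_
    rw [integral_rpow_mul_exp_neg_mul_Ioi (by linarith) hlam]
    exact (mul_pos (by positivity) (Gamma_pos_of_pos (by linarith))).ne'
  have huv : ∀ t, -((exp (-t * lam) - 1) * t ^ (-s)) / s = (u * v) t := fun t => by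
    simp only [Pi.mul_apply, hu_def, hv_def]
    ring
  have hparts := integral_Ioi_mul_deriv_eq_deriv_mul hu hv
    (integrableOn_exp_neg_mul_sub_one_mul_rpow hlam.le hs0 hs1)
    (by rw [Pi.mul_def, hu'v]; exact hE.const_mul _)
    (by simpa using
      ((tendsto_exp_neg_mul_sub_one_mul_rpow_nhdsGT_zero hlam.le hs1).neg.div_const s).congr huv)
    (by simpa using
      ((tendsto_exp_neg_mul_sub_one_mul_rpow_atTop hlam.le hs0).neg.div_const s).congr huv)
  rw [hu'v, integral_const_mul] at hparts
  simpa [hu_def] using hparts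

lemma integral_exp_neg_mul_sub_one_mul_rpow (hlam : 0 ≤ lam) (hs0 : 0 < s) (hs1 : s < 1) :
    ∫ t in Ioi 0, (exp (-t * lam) - 1) * t ^ (-1 - s) = lam ^ s * Gamma (-s) := by
  rcases hlam.eq_or_lt with rfl | hlam
  · simp [zero_rpow hs0.ne']
  have hpow : lam * (1 / lam) ^ (1 - s) = lam ^ s := by
    rw [one_div, inv_rpow hlam.le, ← rpow_neg hlam.le, ← rpow_one_add' hlam.le (by ring_nf; exact hs0.ne')]
    ring_nf
  rw [integral_exp_neg_mul_sub_one_mul_rpow_eq_neg_mul_integral hlam hs0 hs1,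
    integral_rpow_mul_exp_neg_mul_Ioi (by linarith) hlam, Gamma_one_sub hs0.ne', ← hpow]
  field_simp

end

theorem stmt2 (lam : ℝ) (hlam : 0 ≤ lam) (s : ℝ) (hs0 : 0 < s) (hs1 : s < 1) :
    IntegrableOn (fun t : ℝ => (Real.exp (-t * lam) - 1) * t ^ (-1 - s)) (Set.Ioi 0) ∧
    lam ^ s = (1 / Real.Gamma (-s)) *
      ∫ t in Set.Ioi (0 : ℝ), (Real.exp (-t * lam) - 1) * t ^ (-1 - s) := by
  refine ⟨integrableOn_exp_neg_mul_sub_one_mul_rpow hlam hs0 hs1, ?_⟩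
  rw [integral_exp_neg_mul_sub_one_mul_rpow hlam hs0 hs1]
  field_simp [(Gamma_neg_lt_zero hs0 hs1).ne]
end

section
/- Let 0 < s < 1. There exists a constant c > 0, depending only on s, such that |B_{-s-1/2}(z)| ≤ c z^{3/2-s} for all 0 < z ≤ 1, and |B_{-s-1/2}(z)| ≤ c e^{z} z^{-1/2} for all z ≥ 1. -/
/-!
For `z ≤ 1` each term of `B_ρ(z)` is `z ^ (2m+2+ρ) ≤ z ^ (2+ρ)` times the corresponding term at
`z = 1`, so `B_ρ(z) ≤ z ^ (2+ρ) B_ρ(1)`. For `ρ = -s - 1/2`, the Gautschi-type bound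
`Γ(y) ≤ Γ(y - s) y ^ s` (log-convexity of `Γ`) and Legendre's duplication formula
`Γ(m+2) Γ(m+3/2) = (2m+2)! √π / 4 ^ (m+1)` bound the `m`-th term by
`(z ^ (2m+2) / (2m+2)! + 2 z ^ (2m+1) / (2m+1)!) / √z`, and these sum to at most
`(cosh z + 2 sinh z) / √z ≤ 3 e ^ z / √z`. At `z = 1` this also bounds `B_ρ(1)`.
-/

/-- The modified Bessel function of the first kind `I_ρ(z)` minus the first term of its
Taylor expansion: `B_ρ(z) = ∑_{m=1}^∞ (z/2)^(2m+ρ)/(Γ(m+1)Γ(m+ρ+1))`. -/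
noncomputable def besselB (ρ z : ℝ) : ℝ :=
  ∑' m : ℕ, (z / 2) ^ (2 * ((m : ℝ) + 1) + ρ) /
    (Real.Gamma ((m : ℝ) + 2) * Real.Gamma ((m : ℝ) + 1 + ρ + 1))

open Real
open scoped Nat

namespace Real

theorem Gamma_add_le_mul_rpow {x t : ℝ} (hx : 0 < x) (ht0 : 0 < t) (ht1 : t < 1) :
    Gamma (x + t) ≤ Gamma x * x ^ t := by
  have hΓ := Gamma_pos_of_pos hx
  have h := Gamma_mul_add_mul_le_rpow_Gamma_mul_rpow_Gamma hx (by linarith : 0 < x + 1)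
    (sub_pos.2 ht1) ht0 (by ring)
  have hsplit : Gamma x ^ (1 - t) * Gamma x ^ t = Gamma x := by
    rw [← rpow_add hΓ, sub_add_cancel, rpow_one]
  rwa [show (1 - t) * x + t * (x + 1) = x + t by ring, Gamma_add_one hx.ne',
    mul_rpow hx.le hΓ.le, mul_left_comm, hsplit, mul_comm] at h

theorem inv_Gamma_sub_le_rpow_div {y s : ℝ} (hs0 : 0 < s) (hs1 : s < 1) (hy : s < y) :
    (Gamma (y - s))⁻¹ ≤ y ^ s / Gamma y := by
  have hΓ := Gamma_pos_of_pos (sub_pos.2 hy)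
  have h := Gamma_add_le_mul_rpow (sub_pos.2 hy) hs0 hs1
  rw [sub_add_cancel] at h
  rw [inv_eq_one_div, div_le_div_iff₀ hΓ (Gamma_pos_of_pos (by linarith))]
  calc 1 * Gamma y ≤ Gamma (y - s) * (y - s) ^ s := by linarith
    _ ≤ Gamma (y - s) * y ^ s := by gcongr; linarith
    _ = y ^ s * Gamma (y - s) := mul_comm _ _

theorem Gamma_nat_add_two_mul_Gamma_nat_add_three_halves (m : ℕ) :
    Gamma (m + 2) * Gamma (m + 3 / 2) = (2 * m + 2)! * √π / 2 ^ (2 * m + 2) := by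
  have h := Gamma_mul_Gamma_add_half ((m : ℝ) + 3 / 2)
  rw [show (m : ℝ) + 3 / 2 + 1 / 2 = m + 2 by ring,
    show 2 * ((m : ℝ) + 3 / 2) = ((2 * m + 2 : ℕ) : ℝ) + 1 by push_cast; ring,
    Gamma_nat_eq_factorial, show 1 - (((2 * m + 2 : ℕ) : ℝ) + 1) = -((2 * m + 2 : ℕ) : ℝ) by ring,
    rpow_neg zero_le_two, rpow_natCast] at h
  rw [mul_comm, h, div_eq_mul_inv]
  ring

theorem rpow_le_one_add {x s : ℝ} (hx : 0 ≤ x) (hs0 : 0 ≤ s) (hs1 : s ≤ 1) : x ^ s ≤ 1 + x := by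
  calc x ^ s ≤ (1 + x) ^ s := by gcongr; linarith
    _ ≤ 1 + s * x := rpow_one_add_le_one_add_mul_self (by linarith) hs0 hs1
    _ ≤ 1 + x := by nlinarith

end Real

noncomputable def besselBTerm (ρ z : ℝ) (m : ℕ) : ℝ :=
  (z / 2) ^ (2 * ((m : ℝ) + 1) + ρ) / (Gamma ((m : ℝ) + 2) * Gamma ((m : ℝ) + 1 + ρ + 1))

theorem besselB_eq_tsum (ρ z : ℝ) : besselB ρ z = ∑' m, besselBTerm ρ z m := rfl

theorem besselBTerm_nonneg {ρ z : ℝ} (hρ : -2 < ρ) (hz : 0 ≤ z) (m : ℕ) :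
    0 ≤ besselBTerm ρ z m := by
  have hm : (0 : ℝ) ≤ m := m.cast_nonneg
  exact div_nonneg (rpow_nonneg (by positivity) _)
    (mul_nonneg (Gamma_pos_of_pos (by linarith)).le (Gamma_pos_of_pos (by linarith)).le)

theorem besselB_nonneg {ρ z : ℝ} (hρ : -2 < ρ) (hz : 0 ≤ z) : 0 ≤ besselB ρ z :=
  tsum_nonneg (besselBTerm_nonneg hρ hz)

theorem besselBTerm_eq_rpow_mul {ρ z : ℝ} (hz : 0 ≤ z) (m : ℕ) :
    besselBTerm ρ z m = z ^ (2 * ((m : ℝ) + 1) + ρ) * besselBTerm ρ 1 m := by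
  simp only [besselBTerm, div_rpow hz zero_le_two, div_rpow zero_le_one zero_le_two, one_rpow]
  ring

theorem besselBTerm_le_rpow_mul {ρ z : ℝ} (hρ : -2 < ρ) (hz0 : 0 < z) (hz1 : z ≤ 1) (m : ℕ) :
    besselBTerm ρ z m ≤ z ^ (2 + ρ) * besselBTerm ρ 1 m := by
  rw [besselBTerm_eq_rpow_mul hz0.le]
  refine mul_le_mul_of_nonneg_right ?_ (besselBTerm_nonneg hρ zero_le_one m)
  exact rpow_le_rpow_of_exponent_ge hz0 hz1 (by linarith [(m.cast_nonneg : (0 : ℝ) ≤ m)])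

theorem besselB_le_rpow_mul_besselB_one {ρ z : ℝ} (hρ : -2 < ρ) (hz0 : 0 < z) (hz1 : z ≤ 1)
    (hsum : Summable (besselBTerm ρ 1)) : besselB ρ z ≤ z ^ (2 + ρ) * besselB ρ 1 := by
  have hle := besselBTerm_le_rpow_mul hρ hz0 hz1
  have hmaj := hsum.mul_left (z ^ (2 + ρ))
  rw [besselB_eq_tsum, besselB_eq_tsum, ← tsum_mul_left]
  exact (hmaj.of_nonneg_of_le (besselBTerm_nonneg hρ hz0.le) hle).tsum_le_tsum hle hmaj

theorem besselBTerm_neg_sub_half_le_div_Gamma {s z : ℝ} (hs0 : 0 < s) (hs1 : s < 1)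
    (hz : 0 < z) (m : ℕ) :
    besselBTerm (-s - 1 / 2) z m ≤ (z / 2) ^ (2 * m + 2) * (1 + (2 * m + 3) / z) /
      (√(z / 2) * (Gamma ((m : ℝ) + 2) * Gamma ((m : ℝ) + 3 / 2))) := by
  have hz2 : 0 < z / 2 := by positivity
  have hsplit : (z / 2) ^ (2 * ((m : ℝ) + 1) + (-s - 1 / 2)) =
      (z / 2) ^ (2 * m + 2) / √(z / 2) * (z / 2) ^ (-s) := by
    rw [sqrt_eq_rpow, ← rpow_natCast, ← rpow_sub hz2, ← rpow_add hz2]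
    push_cast; ring_nf
  have hratio : (Gamma ((m : ℝ) + 1 + (-s - 1 / 2) + 1))⁻¹ ≤
      ((m : ℝ) + 3 / 2) ^ s / Gamma ((m : ℝ) + 3 / 2) := by
    rw [show (m : ℝ) + 1 + (-s - 1 / 2) + 1 = (m + 3 / 2) - s by ring]
    exact inv_Gamma_sub_le_rpow_div hs0 hs1 (by linarith [(Nat.cast_nonneg m : (0 : ℝ) ≤ m)])
  have hpow : (z / 2) ^ (-s) * ((m : ℝ) + 3 / 2) ^ s ≤ 1 + (2 * m + 3) / z := by
    rw [rpow_neg hz2.le, ← div_eq_inv_mul, ← div_rpow (by positivity) hz2.le,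
      show ((m : ℝ) + 3 / 2) / (z / 2) = (2 * m + 3) / z by field_simp]
    exact rpow_le_one_add (by positivity) hs0.le hs1.le
  have hΓ : 0 < Gamma ((m : ℝ) + 2) := Gamma_pos_of_pos (by positivity)
  have hΓ' : 0 < Gamma ((m : ℝ) + 3 / 2) := Gamma_pos_of_pos (by positivity)
  calc besselBTerm (-s - 1 / 2) z m
      = (z / 2) ^ (2 * m + 2) / √(z / 2) / Gamma ((m : ℝ) + 2) *
          ((z / 2) ^ (-s) * (Gamma ((m : ℝ) + 1 + (-s - 1 / 2) + 1))⁻¹) := by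
        rw [besselBTerm, hsplit]; ring
    _ ≤ (z / 2) ^ (2 * m + 2) / √(z / 2) / Gamma ((m : ℝ) + 2) *
          ((z / 2) ^ (-s) * (((m : ℝ) + 3 / 2) ^ s / Gamma ((m : ℝ) + 3 / 2))) := by
        gcongr
    _ = (z / 2) ^ (2 * m + 2) * ((z / 2) ^ (-s) * ((m : ℝ) + 3 / 2) ^ s) /
          (√(z / 2) * (Gamma ((m : ℝ) + 2) * Gamma ((m : ℝ) + 3 / 2))) := by ring
    _ ≤ _ := by gcongr

theorem besselBTerm_neg_sub_half_le {s z : ℝ} (hs0 : 0 < s) (hs1 : s < 1) (hz : 0 < z) (m : ℕ) :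
    besselBTerm (-s - 1 / 2) z m ≤
      (z ^ (2 * m + 2) / (2 * m + 2)! + 2 * (z ^ (2 * m + 1) / (2 * m + 1)!)) / √z := by
  have hfac : (2 * m + 3 : ℝ) / (2 * m + 2)! ≤ 2 / (2 * m + 1)! := by
    rw [Nat.factorial_succ, Nat.cast_mul, div_le_div_iff₀ (by positivity) (by positivity)]
    push_cast
    nlinarith [(Nat.factorial_pos (2 * m + 1) : 0 < (2 * m + 1)!)]
  calc besselBTerm (-s - 1 / 2) z m
      ≤ (z / 2) ^ (2 * m + 2) * (1 + (2 * m + 3) / z) /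
          (√(z / 2) * (Gamma ((m : ℝ) + 2) * Gamma ((m : ℝ) + 3 / 2))) :=
        besselBTerm_neg_sub_half_le_div_Gamma hs0 hs1 hz m
    _ = z ^ (2 * m + 2) * (1 + (2 * m + 3) / z) / ((2 * m + 2)! * √(z / 2 * π)) := by
        rw [Gamma_nat_add_two_mul_Gamma_nat_add_three_halves, sqrt_mul (by positivity), div_pow]
        field_simp
    _ ≤ z ^ (2 * m + 2) * (1 + (2 * m + 3) / z) / ((2 * m + 2)! * √z) := by
        gcongr
        nlinarith [pi_gt_three]
    _ = (z ^ (2 * m + 2) / (2 * m + 2)! + (2 * m + 3) / (2 * m + 2)! * z ^ (2 * m + 1)) / √z := by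
        rw [pow_succ z (2 * m + 1)]
        field_simp
    _ ≤ (z ^ (2 * m + 2) / (2 * m + 2)! + 2 / (2 * m + 1)! * z ^ (2 * m + 1)) / √z := by
        gcongr
    _ = _ := by ring

theorem hasSum_cosh_sub_one_add_two_mul_sinh (z : ℝ) :
    HasSum (fun m : ℕ => z ^ (2 * m + 2) / (2 * m + 2)! + 2 * (z ^ (2 * m + 1) / (2 * m + 1)!))
      (cosh z - 1 + 2 * sinh z) := by
  have hcosh := (hasSum_nat_add_iff' 1).mpr (hasSum_cosh z)
  simp only [Finset.sum_range_one, mul_zero, pow_zero, Nat.factorial_zero, Nat.cast_one,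
    div_one, mul_add_one] at hcosh
  exact hcosh.add ((hasSum_sinh z).mul_left 2)

theorem besselB_neg_sub_half_le {s z : ℝ} (hs0 : 0 < s) (hs1 : s < 1) (hz : 0 < z) :
    Summable (besselBTerm (-s - 1 / 2) z) ∧ besselB (-s - 1 / 2) z ≤ 3 * exp z / √z := by
  have hmaj := (hasSum_cosh_sub_one_add_two_mul_sinh z).div_const √z
  have hle := besselBTerm_neg_sub_half_le hs0 hs1 hz
  have hsum := hmaj.summable.of_nonneg_of_le (besselBTerm_nonneg (by linarith) hz.le) hle
  refine ⟨hsum, (hasSum_le hle hsum.hasSum hmaj).trans ?_⟩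
  gcongr
  rw [cosh_eq, sinh_eq]
  linarith [exp_pos (-z), exp_le_exp.2 (by linarith : -z ≤ z)]

theorem stmt3 (s : ℝ) (hs0 : 0 < s) (hs1 : s < 1) :
    ∃ c : ℝ, 0 < c ∧
      (∀ z : ℝ, 0 < z → z ≤ 1 → |besselB (-s - 1/2) z| ≤ c * z ^ (3/2 - s)) ∧
      (∀ z : ℝ, 1 ≤ z → |besselB (-s - 1/2) z| ≤ c * Real.exp z * z ^ (-(1/2) : ℝ)) := by
  have hρ : (-2 : ℝ) < -s - 1 / 2 := by linarith
  obtain ⟨hsum1, hB1⟩ := besselB_neg_sub_half_le hs0 hs1 one_pos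
  rw [sqrt_one, div_one] at hB1
  refine ⟨3 * exp 1, by positivity, fun z hz0 hz1 => ?_, fun z hz => ?_⟩
  · rw [abs_of_nonneg (besselB_nonneg hρ hz0.le)]
    calc besselB (-s - 1 / 2) z ≤ z ^ (2 + (-s - 1 / 2)) * besselB (-s - 1 / 2) 1 :=
          besselB_le_rpow_mul_besselB_one hρ hz0 hz1 hsum1
      _ ≤ 3 * exp 1 * z ^ (3 / 2 - s) := by
          rw [show 2 + (-s - 1 / 2) = 3 / 2 - s by ring, mul_comm]
          gcongr
  · have hz0 : 0 < z := by linarith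
    rw [abs_of_nonneg (besselB_nonneg hρ hz0.le)]
    calc besselB (-s - 1 / 2) z ≤ 3 * exp z / √z := (besselB_neg_sub_half_le hs0 hs1 hz0).2
      _ ≤ 3 * exp 1 * exp z * z ^ (-(1 / 2) : ℝ) := by
          rw [rpow_neg hz0.le, ← sqrt_eq_rpow, div_eq_mul_inv]
          gcongr
          linarith [one_le_exp zero_le_one]
end

section
/- Fix σ ∈ ℂ with σ ≠ 1. Then ζ(σ, x) − x^{-σ} tends to the Riemann zeta value ζ(σ) as x → 0^+ (x real, 0 < x < 1). -/
/-!
For `-1 < re σ`, summing the trapezoidal rule for `t ↦ t ^ (-s)` over the intervals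
`[n + w, n + w + 1]` gives, for `1 < re s` and `w ≥ 1`,
`(s - 1) ∑ₙ (n + w) ^ (-s) = w ^ (1 - s) + (s - 1) w ^ (-s) / 2 + ∑ₙ E(s, n + w)`,
where the error terms are `O(n ^ (-re s - 2))`. The right-hand side is therefore holomorphic in
`-1 < re s` and continuous in `w`. With `w = 1 + x` and `w = 1` the left-hand sums are
`ζ(s, x) - x ^ (-s)` and `ζ(s)`, so the identity theorem, applied to the entire function
`(s - 1) (ζ(s, x) - x ^ (-s) - ζ(s))`, extends the identity to `-1 < re s`; then let `x → 0`.

For `re σ < 0` the functional equation expresses `ζ(σ, x)` through `expZeta (±x) (1 - σ)`, whose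
Fourier series converge uniformly in `x`; so `ζ(σ, x)` is continuous at `x = 0`, while
`x ^ (-σ) → 0`.
-/

open HurwitzZeta Complex Filter Topology Set MeasureTheory

theorem trapezoid_sub_integral_eq {g g' g'' : ℝ → ℂ}
    (hg : ∀ u ∈ Icc (0:ℝ) 1, HasDerivAt g (g' u) u)
    (hg' : ∀ u ∈ Icc (0:ℝ) 1, HasDerivAt g' (g'' u) u)
    (hg'' : IntervalIntegrable g'' volume 0 1) :
    (g 0 + g 1) / 2 - ∫ u in (0:ℝ)..1, g u
      = -∫ u in (0:ℝ)..1, ((u:ℂ) ^ 2 - u) / 2 * g'' u := by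
  rw [← uIcc_of_le zero_le_one] at hg hg'
  have hg_int : IntervalIntegrable g volume 0 1 :=
    ContinuousOn.intervalIntegrable fun u hu => (hg u hu).continuousAt.continuousWithinAt
  have hψg''_int : IntervalIntegrable (fun u : ℝ => ((u:ℂ) ^ 2 - u) / 2 * g'' u) volume 0 1 :=
    hg''.continuousOn_mul (by fun_prop)
  -- integrate `(ψ g' - φ g)' = ψ g'' - g`, where `φ u = u - 1/2` and `ψ u = (u² - u)/2`
  have hderiv : ∀ u ∈ uIcc (0:ℝ) 1, HasDerivAt
      (fun u : ℝ => ((u:ℂ) ^ 2 - u) / 2 * g' u - ((u:ℂ) - 1 / 2) * g u)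
      (((u:ℂ) ^ 2 - u) / 2 * g'' u - g u) u := by
    intro u hu
    have hid : HasDerivAt (fun u : ℝ => (u:ℂ)) 1 u := (hasDerivAt_id u).ofReal_comp
    have hψ := ((hid.fun_pow 2).fun_sub hid).div_const 2
    have hφ := hid.sub_const (1 / 2 : ℂ)
    refine ((hψ.fun_mul (hg' u hu)).fun_sub (hφ.fun_mul (hg u hu))).congr_deriv ?_
    push_cast
    ring
  have hFTC := intervalIntegral.integral_eq_sub_of_hasDerivAt hderiv (hψg''_int.sub hg_int)
  rw [intervalIntegral.integral_sub hψg''_int hg_int] at hFTC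
  norm_num at hFTC
  linear_combination hFTC

theorem norm_trapezoid_sub_integral_le {g g' g'' : ℝ → ℂ} {M : ℝ}
    (hg : ∀ u ∈ Icc (0:ℝ) 1, HasDerivAt g (g' u) u)
    (hg' : ∀ u ∈ Icc (0:ℝ) 1, HasDerivAt g' (g'' u) u)
    (hg'' : IntervalIntegrable g'' volume 0 1) (hM : ∀ u ∈ Icc (0:ℝ) 1, ‖g'' u‖ ≤ M) :
    ‖(g 0 + g 1) / 2 - ∫ u in (0:ℝ)..1, g u‖ ≤ M / 8 := by
  have hbound : ∀ u ∈ uIoc (0:ℝ) 1, ‖((u:ℂ) ^ 2 - u) / 2 * g'' u‖ ≤ M / 8 := by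
    intro u hu
    rw [uIoc_of_le zero_le_one] at hu
    have hψ : ‖((u:ℂ) ^ 2 - u) / 2‖ ≤ 1 / 8 := by
      rw [show ((u:ℂ) ^ 2 - u) / 2 = (((u ^ 2 - u) / 2 : ℝ) : ℂ) by push_cast; rfl,
        norm_real, Real.norm_eq_abs, abs_le]
      constructor <;> nlinarith [hu.1, hu.2, sq_nonneg (u - 1 / 2)]
    calc ‖((u:ℂ) ^ 2 - u) / 2 * g'' u‖ ≤ 1 / 8 * M := by
          rw [norm_mul]
          exact mul_le_mul hψ (hM u (Ioc_subset_Icc_self hu)) (norm_nonneg _) (by norm_num)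
      _ = M / 8 := by ring
  rw [trapezoid_sub_integral_eq hg hg' hg'', norm_neg]
  simpa using intervalIntegral.norm_integral_le_of_norm_le_const hbound

lemma hasDerivAt_ofReal_add_cpow_const {c u : ℝ} (h : 0 < c + u) (z : ℂ) :
    HasDerivAt (fun t : ℝ => ((c + t : ℝ) : ℂ) ^ z)
      (z * ((c + u : ℝ) : ℂ) ^ (z - 1)) u := by
  have hmem : (c : ℂ) + u ∈ slitPlane := by
    rw [← ofReal_add]
    exact ofReal_mem_slitPlane.mpr h
  simpa using (((hasDerivAt_id (u : ℂ)).const_add (c : ℂ)).cpow_const hmem).comp_ofReal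

lemma summable_nat_add_one_rpow {p : ℝ} (hp : p < -1) :
    Summable fun n : ℕ => ((n : ℝ) + 1) ^ p := by
  simpa using (summable_nat_add_iff 1).mpr (Real.summable_nat_rpow.mpr hp)

lemma summable_ofReal_nat_add_cpow {s : ℂ} (hs : 1 < s.re) {w : ℝ} (hw : 0 < w) :
    Summable fun n : ℕ => (((n : ℝ) + w : ℝ) : ℂ) ^ (-s) := by
  refine .of_norm ((Real.summable_one_div_nat_add_rpow w s.re).mpr hs |>.congr fun n => ?_)
  rw [norm_cpow_eq_rpow_re_of_pos (by positivity), neg_re, Real.rpow_neg (by positivity),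
    abs_of_nonneg (by positivity), one_div]

lemma tendsto_ofReal_nat_add_cpow_atTop_zero {w : ℝ} (hw : 0 ≤ w) {z : ℂ} (hz : z.re < 0) :
    Tendsto (fun n : ℕ => (((n : ℝ) + w : ℝ) : ℂ) ^ z) atTop (𝓝 0) := by
  rw [tendsto_zero_iff_norm_tendsto_zero]
  refine ((tendsto_rpow_neg_atTop (neg_pos.mpr hz)).comp
    (tendsto_atTop_add_const_right _ w tendsto_natCast_atTop_atTop)).congr' ?_
  filter_upwards [eventually_gt_atTop 0] with n hn
  rw [Function.comp_apply, neg_neg, norm_cpow_eq_rpow_re_of_pos (by positivity)]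

/-- `(s - 1)` times the trapezoidal-rule error `(f c + f (c + 1)) / 2 - ∫ t in c..c + 1, f t`
for `f t = t ^ (-s)`. -/
noncomputable def eulerMaclaurinTerm (s : ℂ) (c : ℝ) : ℂ :=
  (s - 1) * ((c : ℂ) ^ (-s) + ((c + 1 : ℝ) : ℂ) ^ (-s)) / 2
    + (((c + 1 : ℝ) : ℂ) ^ (1 - s) - (c : ℂ) ^ (1 - s))

lemma differentiable_eulerMaclaurinTerm {c : ℝ} (hc : 0 < c) :
    Differentiable ℂ (fun s => eulerMaclaurinTerm s c) := by
  have h0 : (c : ℂ) ≠ 0 := by exact_mod_cast hc.ne'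
  have h1 : ((c + 1 : ℝ) : ℂ) ≠ 0 := by exact_mod_cast (by linarith : c + 1 ≠ 0)
  unfold eulerMaclaurinTerm
  fun_prop (disch := first | exact Or.inl h0 | exact Or.inl h1)

lemma continuousOn_eulerMaclaurinTerm (s : ℂ) :
    ContinuousOn (eulerMaclaurinTerm s) (Ioi 0) := by
  intro c (hc : 0 < c)
  have hpow (z : ℂ) : ContinuousAt (fun c : ℝ => (c : ℂ) ^ z) c :=
    continuousAt_ofReal_cpow_const c z (Or.inr hc.ne')
  have hpow1 (z : ℂ) : ContinuousAt (fun c : ℝ => ((c + 1 : ℝ) : ℂ) ^ z) c :=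
    (continuousAt_ofReal_cpow_const (c + 1) z (Or.inr (by positivity))).comp
      (f := fun c : ℝ => c + 1) (continuous_add_const 1).continuousAt
  unfold eulerMaclaurinTerm
  exact ((((hpow _).add (hpow1 _)).const_mul _).div_const _ |>.add
    ((hpow1 _).sub (hpow _))).continuousWithinAt

lemma norm_eulerMaclaurinTerm_le {s : ℂ} (hs : -2 ≤ s.re) {c : ℝ} (hc : 0 < c) :
    ‖eulerMaclaurinTerm s c‖ ≤ ‖s - 1‖ * ‖s‖ * ‖s + 1‖ / 8 * c ^ (-s.re - 2) := by
  rcases eq_or_ne s 1 with rfl | hs1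
  · simp [eulerMaclaurinTerm]
  have hpos : ∀ u ∈ Icc (0:ℝ) 1, 0 < c + u := fun u hu => by linarith [hu.1]
  set g := fun u : ℝ => ((c + u : ℝ) : ℂ) ^ (-s)
  set g' := fun u : ℝ => -s * ((c + u : ℝ) : ℂ) ^ (-s - 1)
  set g'' := fun u : ℝ => s * (s + 1) * ((c + u : ℝ) : ℂ) ^ (-s - 2)
  have hg : ∀ u ∈ Icc (0:ℝ) 1, HasDerivAt g (g' u) u := fun u hu =>
    hasDerivAt_ofReal_add_cpow_const (hpos u hu) (-s)
  have hg' : ∀ u ∈ Icc (0:ℝ) 1, HasDerivAt g' (g'' u) u := fun u hu =>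
    ((hasDerivAt_ofReal_add_cpow_const (hpos u hu) (-s - 1)).const_mul (-s)).congr_deriv
      (by simp only [g'']; ring_nf)
  have hg'' : ContinuousOn g'' (Icc 0 1) := fun u hu =>
    ((hasDerivAt_ofReal_add_cpow_const (hpos u hu) (-s - 2)).continuousAt.const_mul
      _).continuousWithinAt
  have hg''_le : ∀ u ∈ Icc (0:ℝ) 1,
      ‖g'' u‖ ≤ ‖s‖ * ‖s + 1‖ * c ^ (-s.re - 2) := by
    intro u hu
    simp only [g'', norm_mul, norm_cpow_eq_rpow_re_of_pos (hpos u hu)]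
    gcongr
    exact Real.rpow_le_rpow_of_nonpos hc (by linarith [hu.1]) (by simp; linarith)
  have hintegral : ∫ u in (0:ℝ)..1, g u
      = (((c + 1 : ℝ) : ℂ) ^ (1 - s) - (c : ℂ) ^ (1 - s)) / (1 - s) := by
    have hc0 : (0:ℝ) ∉ uIcc c (c + 1) := by simp [uIcc_of_le]; intro h; linarith
    rw [intervalIntegral.integral_comp_add_left (fun t : ℝ => (t : ℂ) ^ (-s)), add_zero,
      integral_cpow (Or.inr ⟨fun h => hs1 (neg_inj.mp h), hc0⟩)]
    ring_nf
  have hterm :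
      eulerMaclaurinTerm s c = (s - 1) * ((g 0 + g 1) / 2 - ∫ u in (0:ℝ)..1, g u) := by
    rw [hintegral]
    simp only [g, eulerMaclaurinTerm, add_zero]
    field_simp
    ring
  calc ‖eulerMaclaurinTerm s c‖
      ≤ ‖s - 1‖ * (‖s‖ * ‖s + 1‖ * c ^ (-s.re - 2) / 8) := by
        rw [hterm, norm_mul]
        gcongr
        exact norm_trapezoid_sub_integral_le hg hg' (hg''.intervalIntegrable_of_Icc zero_le_one)
          hg''_le
    _ = ‖s - 1‖ * ‖s‖ * ‖s + 1‖ / 8 * c ^ (-s.re - 2) := by ring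

lemma norm_eulerMaclaurinTerm_nat_add_le {s : ℂ} (hs : -2 ≤ s.re) {w : ℝ} (hw : 1 ≤ w)
    (n : ℕ) : ‖eulerMaclaurinTerm s (n + w)‖
      ≤ ‖s - 1‖ * ‖s‖ * ‖s + 1‖ / 8 * ((n : ℝ) + 1) ^ (-s.re - 2) := by
  refine (norm_eulerMaclaurinTerm_le hs (by positivity)).trans
    (mul_le_mul_of_nonneg_left ?_ (by positivity))
  exact Real.rpow_le_rpow_of_nonpos (by positivity) (by linarith) (by linarith)

lemma summable_eulerMaclaurinTerm {s : ℂ} (hs : -1 < s.re) {w : ℝ} (hw : 1 ≤ w) :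
    Summable fun n : ℕ => eulerMaclaurinTerm s (n + w) :=
  .of_norm_bounded ((summable_nat_add_one_rpow (by linarith)).mul_left _)
    (norm_eulerMaclaurinTerm_nat_add_le (by linarith) hw)

/-- The continuation of `(s - 1) ∑ₙ (n + w) ^ (-s)` to `-1 < re s`. -/
noncomputable def eulerMaclaurinZeta (w : ℝ) (s : ℂ) : ℂ :=
  (w : ℂ) ^ (1 - s) + (s - 1) * (w : ℂ) ^ (-s) / 2 + ∑' n : ℕ, eulerMaclaurinTerm s (n + w)

lemma sub_one_mul_tsum_eq_eulerMaclaurinZeta {s : ℂ} (hs : 1 < s.re) {w : ℝ} (hw : 1 ≤ w) :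
    (s - 1) * ∑' n : ℕ, (((n : ℝ) + w : ℝ) : ℂ) ^ (-s) = eulerMaclaurinZeta w s := by
  set G : ℕ → ℂ := fun n => (((n : ℝ) + w : ℝ) : ℂ) ^ (1 - s)
    + (s - 1) * (((n : ℝ) + w : ℝ) : ℂ) ^ (-s) / 2
  have hG : Tendsto G atTop (𝓝 0) := by
    have h₁ := tendsto_ofReal_nat_add_cpow_atTop_zero (by linarith) (z := 1 - s)
      (by simp; linarith)
    have h₂ := tendsto_ofReal_nat_add_cpow_atTop_zero (by linarith) (z := -s) (by simp; linarith)
    simpa only [mul_zero, zero_div, add_zero] using h₁.add ((h₂.const_mul (s - 1)).div_const 2)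
  have htelescope : ∀ n : ℕ, (s - 1) * (((n : ℝ) + w : ℝ) : ℂ) ^ (-s)
      = G n - G (n + 1) + eulerMaclaurinTerm s (n + w) := by
    intro n
    simp only [G, eulerMaclaurinTerm, Nat.cast_succ, add_right_comm _ (1 : ℝ) w]
    ring
  have hE := summable_eulerMaclaurinTerm (by linarith) hw (s := s)
  have hsum : HasSum (fun n : ℕ => G n - G (n + 1)) (G 0) := by
    have hsummable : Summable fun n : ℕ => G n - G (n + 1) :=
      (((summable_ofReal_nat_add_cpow hs (by linarith)).mul_left (s - 1)).sub hE).congr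
        fun n => by rw [htelescope n]; ring
    rw [hsummable.hasSum_iff_tendsto_nat]
    simp_rw [Finset.sum_range_sub']
    simpa using tendsto_const_nhds.sub hG
  calc (s - 1) * ∑' n : ℕ, (((n : ℝ) + w : ℝ) : ℂ) ^ (-s)
      = ∑' n : ℕ, (G n - G (n + 1) + eulerMaclaurinTerm s (n + w)) := by
        rw [← tsum_mul_left]
        exact tsum_congr htelescope
    _ = G 0 + ∑' n : ℕ, eulerMaclaurinTerm s (n + w) := (hsum.add hE.hasSum).tsum_eq
    _ = eulerMaclaurinZeta w s := by simp [G, eulerMaclaurinZeta]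

lemma differentiableOn_eulerMaclaurinZeta {w : ℝ} (hw : 1 ≤ w) :
    DifferentiableOn ℂ (eulerMaclaurinZeta w) {s | -1 < s.re} := by
  have hw0 : (w : ℂ) ≠ 0 := by exact_mod_cast (by linarith : w ≠ 0)
  have hmain :
      Differentiable ℂ fun s : ℂ => (w : ℂ) ^ (1 - s) + (s - 1) * (w : ℂ) ^ (-s) / 2 := by
    fun_prop (disch := exact Or.inl hw0)
  have htsum : DifferentiableOn ℂ (fun s => ∑' n : ℕ, eulerMaclaurinTerm s (n + w))
      {s | -1 < s.re} := by
    intro s₀ (hs₀ : -1 < s₀.re)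
    obtain ⟨a, ha, has₀⟩ := exists_between hs₀
    set R := ‖s₀‖ + 1
    set V := {s : ℂ | a < s.re} ∩ Metric.ball 0 R
    have hV : IsOpen V := (isOpen_lt continuous_const continuous_re).inter Metric.isOpen_ball
    have hbound : ∀ (n : ℕ), ∀ s ∈ V, ‖eulerMaclaurinTerm s (n + w)‖
        ≤ (R + 1) * R * (R + 1) / 8 * ((n : ℝ) + 1) ^ (-a - 2) := by
      rintro n s ⟨hsa : a < s.re, hsR⟩
      rw [mem_ball_zero_iff] at hsR
      refine (norm_eulerMaclaurinTerm_nat_add_le (by linarith) hw n).trans ?_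
      gcongr
      · exact (norm_sub_le _ _).trans (by simp; linarith)
      · exact (norm_add_le _ _).trans (by simp; linarith)
      · simp
    have hdiff := differentiableOn_tsum_of_summable_norm
      ((summable_nat_add_one_rpow (by linarith)).mul_left _)
      (fun n => (differentiable_eulerMaclaurinTerm (by positivity)).differentiableOn) hV hbound
    refine (hdiff.differentiableAt (hV.mem_nhds ⟨?_, ?_⟩)).differentiableWithinAt
    · exact has₀
    · simp [R]
  exact hmain.differentiableOn.add htsum

lemma continuousOn_eulerMaclaurinZeta {s : ℂ} (hs : -1 < s.re) :
    ContinuousOn (fun w => eulerMaclaurinZeta w s) (Ici 1) := by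
  have hpow (z : ℂ) : ContinuousOn (fun w : ℝ => (w : ℂ) ^ z) (Ici 1) :=
    fun w (hw : 1 ≤ w) =>
      (continuousAt_ofReal_cpow_const w z (Or.inr (by positivity))).continuousWithinAt
  have htsum : ContinuousOn (fun w => ∑' n : ℕ, eulerMaclaurinTerm s (n + w)) (Ici 1) :=
    continuousOn_tsum (fun n => (continuousOn_eulerMaclaurinTerm s).comp
        (continuousOn_const.add continuousOn_id) fun w (hw : 1 ≤ w) => by
          show 0 < (n : ℝ) + w
          positivity)
      ((summable_nat_add_one_rpow (by linarith)).mul_left _)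
      fun n w hw => norm_eulerMaclaurinTerm_nat_add_le (by linarith) hw n
  exact ((hpow _).add ((continuousOn_const.mul (hpow _)).div_const 2)).add htsum

lemma sub_one_mul_hurwitzZeta_sub_cpow_of_one_lt_re {x : ℝ} (hx : x ∈ Icc 0 1) {s : ℂ}
    (hs : 1 < s.re) :
    (s - 1) * (hurwitzZeta x s - (x : ℂ) ^ (-s)) = eulerMaclaurinZeta (1 + x) s := by
  have hζ := hasSum_hurwitzZeta_of_one_lt_re hx hs
  have htail : HasSum (fun n : ℕ => (((n : ℝ) + (1 + x) : ℝ) : ℂ) ^ (-s))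
      (hurwitzZeta x s - (x : ℂ) ^ (-s)) := by
    rw [← hasSum_nat_add_iff' 1, Finset.sum_range_one, Nat.cast_zero, zero_add, one_div,
      ← cpow_neg] at hζ
    refine hζ.congr_fun fun n => ?_
    rw [one_div, ← cpow_neg]
    push_cast
    ring_nf
  rw [← htail.tsum_eq, sub_one_mul_tsum_eq_eulerMaclaurinZeta hs (by linarith [hx.1])]

lemma sub_one_mul_hurwitzZeta_sub_cpow_sub_riemannZeta {x : ℝ} (hx : x ∈ Ioc 0 1) {s : ℂ}
    (hs : -1 < s.re) :
    (s - 1) * (hurwitzZeta x s - (x : ℂ) ^ (-s) - riemannZeta s)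
      = eulerMaclaurinZeta (1 + x) s - eulerMaclaurinZeta 1 s := by
  set U := {s : ℂ | -1 < s.re}
  have hU : IsOpen U := isOpen_lt continuous_const continuous_re
  have hx0 : (x : ℂ) ≠ 0 := by exact_mod_cast hx.1.ne'
  have hlhs : DifferentiableOn ℂ
      (fun s => (s - 1) * (hurwitzZeta x s - (x : ℂ) ^ (-s) - riemannZeta s)) U := by
    have hdiff := differentiable_hurwitzZeta_sub_hurwitzZeta x 0
    simp only [hurwitzZeta_zero] at hdiff
    have hpow : Differentiable ℂ fun s : ℂ => (x : ℂ) ^ (-s) := by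
      fun_prop (disch := exact Or.inl hx0)
    exact ((differentiable_id.sub_const 1).mul (hdiff.sub hpow)).differentiableOn.congr
      fun s _ => by simp only [Pi.mul_apply, Pi.sub_apply, id]; ring
  have hrhs :
      DifferentiableOn ℂ (fun s => eulerMaclaurinZeta (1 + x) s - eulerMaclaurinZeta 1 s) U :=
    (differentiableOn_eulerMaclaurinZeta (by linarith [hx.1])).sub
      (differentiableOn_eulerMaclaurinZeta le_rfl)
  have hconv : ∀ s : ℂ, 1 < s.re →
      (s - 1) * (hurwitzZeta x s - (x : ℂ) ^ (-s) - riemannZeta s)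
        = eulerMaclaurinZeta (1 + x) s - eulerMaclaurinZeta 1 s := by
    intro s hs
    have h₀ := sub_one_mul_hurwitzZeta_sub_cpow_of_one_lt_re (x := 0) (by simp) hs
    have hs0 : -s ≠ 0 := neg_ne_zero.mpr (by rintro rfl; norm_num at hs)
    simp only [QuotientAddGroup.mk_zero, ofReal_zero, hurwitzZeta_zero, zero_cpow hs0, add_zero,
      sub_zero] at h₀
    rw [mul_sub, sub_one_mul_hurwitzZeta_sub_cpow_of_one_lt_re (Ioc_subset_Icc_self hx) hs, h₀]
  refine (hlhs.analyticOnNhd hU).eqOn_of_preconnected_of_eventuallyEq (hrhs.analyticOnNhd hU)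
    (convex_halfSpace_re_gt (-1)).isPreconnected (by norm_num [U] : (2 : ℂ) ∈ U) ?_ hs
  filter_upwards [(isOpen_lt continuous_const continuous_re).mem_nhds
    (by norm_num : (2 : ℂ) ∈ {s : ℂ | 1 < s.re})] with s hs
  exact hconv s hs

lemma tendsto_hurwitzZeta_sub_cpow_of_neg_one_lt_re {σ : ℂ} (hσ : σ ≠ 1)
    (hσ' : -1 < σ.re) :
    Tendsto (fun x : ℝ => hurwitzZeta x σ - (x : ℂ) ^ (-σ)) (𝓝[Ioo 0 1] 0)
      (𝓝 (riemannZeta σ)) := by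
  have hcont : Tendsto (fun x : ℝ => eulerMaclaurinZeta (1 + x) σ) (𝓝[Ioo 0 1] 0)
      (𝓝 (eulerMaclaurinZeta 1 σ)) := by
    have h := (continuousOn_eulerMaclaurinZeta hσ' 1 self_mem_Ici).tendsto
    refine h.comp (tendsto_nhdsWithin_of_tendsto_nhds_of_eventually_within _ ?_ ?_)
    · exact ((continuous_const_add 1).tendsto' 0 1 (add_zero 1)).mono_left nhdsWithin_le_nhds
    · filter_upwards [self_mem_nhdsWithin] with x hx
      simp [hx.1.le]
  have hσ1 : σ - 1 ≠ 0 := sub_ne_zero.mpr hσ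
  have hlim := tendsto_const_nhds (x := riemannZeta σ) |>.add
    ((hcont.sub_const (eulerMaclaurinZeta 1 σ)).div_const (σ - 1))
  rw [sub_self, zero_div, add_zero] at hlim
  refine hlim.congr' ?_
  filter_upwards [self_mem_nhdsWithin] with x hx
  rw [← sub_one_mul_hurwitzZeta_sub_cpow_sub_riemannZeta (Ioo_subset_Ioc_self hx) (by linarith),
    mul_div_cancel_left₀ _ hσ1]
  ring

lemma continuous_expZeta_of_one_lt_re {s : ℂ} (hs : 1 < s.re) :
    Continuous fun a : ℝ => expZeta a s := by
  simp_rw [← fun a : ℝ => (hasSum_expZeta_of_one_lt_re a hs).tsum_eq]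
  refine continuous_tsum (u := fun n : ℕ => (n : ℝ) ^ (-s.re)) (fun n => by fun_prop)
    (Real.summable_nat_rpow.mpr (by linarith)) fun n a => ?_
  have harg : 2 * Real.pi * I * a * n = ((2 * Real.pi * a * n : ℝ) : ℂ) * I := by
    push_cast
    ring
  rw [norm_div, harg, norm_exp_ofReal_mul_I, norm_natCast_cpow_of_re_ne_zero n (by linarith),
    Real.rpow_neg n.cast_nonneg, one_div]

lemma continuous_hurwitzZeta_of_re_neg {σ : ℂ} (hσ : σ.re < 0) :
    Continuous fun x : ℝ => hurwitzZeta x σ := by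
  have hs : 1 < (1 - σ).re := by simp; linarith
  have hfe (x : ℝ) := hurwitzZeta_one_sub (x : UnitAddCircle) (s := 1 - σ)
    (fun n h => by have := congrArg re h; simp at this; linarith [n.cast_nonneg (α := ℝ)])
    (Or.inr fun h => by rw [h] at hs; norm_num at hs)
  simp only [sub_sub_cancel] at hfe
  simp_rw [hfe, ← QuotientAddGroup.mk_neg]
  have hexp := continuous_expZeta_of_one_lt_re hs
  exact continuous_const.mul ((continuous_const.mul hexp).add
    (continuous_const.mul (hexp.comp continuous_neg)))

lemma tendsto_hurwitzZeta_sub_cpow_of_re_neg {σ : ℂ} (hσ : σ.re < 0) :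
    Tendsto (fun x : ℝ => hurwitzZeta x σ - (x : ℂ) ^ (-σ)) (𝓝[Ioo 0 1] 0)
      (𝓝 (riemannZeta σ)) := by
  have hpow := continuousAt_ofReal_cpow_const 0 (-σ) (Or.inl (by simpa using hσ))
  have hlim := ((continuous_hurwitzZeta_of_re_neg hσ).tendsto 0).sub hpow.tendsto
  rw [ofReal_zero, zero_cpow (neg_ne_zero.mpr fun h => by simp [h] at hσ), sub_zero,
    QuotientAddGroup.mk_zero, hurwitzZeta_zero] at hlim
  exact hlim.mono_left nhdsWithin_le_nhds

theorem stmt6 (σ : ℂ) (hσ : σ ≠ 1) :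
    Filter.Tendsto (fun x : ℝ => hurwitzZeta (x : UnitAddCircle) σ - (x : ℂ) ^ (-σ))
      (nhdsWithin 0 (Set.Ioo 0 1)) (nhds (riemannZeta σ)) := by
  rcases lt_or_ge σ.re 0 with hneg | hnonneg
  · exact tendsto_hurwitzZeta_sub_cpow_of_re_neg hneg
  · exact tendsto_hurwitzZeta_sub_cpow_of_neg_one_lt_re hσ (by linarith)
end

section
/- Let n ≥ 2 and 0 < s < (n-1)/2. There exist constants 0 < c ≤ C, depending only on n and s, such that for every 0 < a ≤ 2: c a^{-((n-1)-2s)/2} ≤ ∫_0^1 t^{2s}/(t² + a)^{n/2} dt ≤ C a^{-((n-1)-2s)/2}. -/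
set_option maxHeartbeats 1000000

open Real MeasureTheory intervalIntegral

lemma cont_rpow_aux (p : ℝ) (hp : 0 ≤ p) : Continuous (fun t : ℝ => t ^ p) := by
  rw [continuous_iff_continuousAt]
  intro x
  exact Real.continuousAt_rpow_const x p (Or.inr hp)

lemma cont_aux (n : ℕ) (s a : ℝ) (hs : 0 ≤ s) (ha : 0 < a) :
    Continuous (fun t : ℝ => t ^ (2 * s) / (t ^ 2 + a) ^ ((n : ℝ) / 2)) := by
  refine (cont_rpow_aux (2 * s) (by linarith)).div ?_ (fun t => by positivity)
  rw [continuous_iff_continuousAt]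
  intro x
  exact (((continuous_pow 2).add continuous_const).continuousAt).rpow_const
    (Or.inr (by positivity))

theorem stmt16 (n : ℕ) (hn : 2 ≤ n) (s : ℝ) (hs0 : 0 < s) (hs1 : s < ((n : ℝ) - 1) / 2) :
    ∃ c C : ℝ, 0 < c ∧ c ≤ C ∧ ∀ a : ℝ, 0 < a → a ≤ 2 →
      (c * a ^ (-(((n : ℝ) - 1) - 2 * s) / 2) ≤
          ∫ t in (0 : ℝ)..1, t ^ (2 * s) / (t ^ 2 + a) ^ ((n : ℝ) / 2)) ∧
      (∫ t in (0 : ℝ)..1, t ^ (2 * s) / (t ^ 2 + a) ^ ((n : ℝ) / 2)) ≤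
        C * a ^ (-(((n : ℝ) - 1) - 2 * s) / 2) := by
  have hns : 0 < (n : ℝ) - 1 - 2 * s := by linarith
  set e : ℝ := -(((n : ℝ) - 1) - 2 * s) / 2 with he
  set C : ℝ := 1 / (2 * s + 1) + 1 / ((n : ℝ) - 1 - 2 * s) with hC
  have hCpos : 0 < C := by positivity
  have hsqrt2 : Real.sqrt 2 < 2 := by
    nlinarith [Real.sq_sqrt (by norm_num : (0:ℝ) ≤ 2), Real.sqrt_nonneg 2]
  have hsqrt2pos : 0 < Real.sqrt 2 := Real.sqrt_pos.2 (by norm_num)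
  have hhalf : (1 : ℝ) / 2 < 1 / Real.sqrt 2 :=
    one_div_lt_one_div_of_lt hsqrt2pos hsqrt2
  set c0 : ℝ := (1 / Real.sqrt 2 - 1 / 2) * (2 : ℝ) ^ (-(2 * s)) * (2 / 3 : ℝ) ^ ((n : ℝ) / 2)
    with hc0def
  have hc0 : 0 < c0 := by
    have h1 : (0:ℝ) < 1 / Real.sqrt 2 - 1 / 2 := by linarith
    positivity
  refine ⟨min c0 C, C, lt_min hc0 hCpos, min_le_right _ _, ?_⟩
  intro a ha ha2
  set f : ℝ → ℝ := fun t => t ^ (2 * s) / (t ^ 2 + a) ^ ((n : ℝ) / 2) with hf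
  have hcont : Continuous f := cont_aux n s a hs0.le ha
  have hint : ∀ p q : ℝ, IntervalIntegrable f volume p q :=
    fun p q => hcont.intervalIntegrable p q
  have hfnn : ∀ t : ℝ, 0 ≤ t → 0 ≤ f t := by
    intro t ht
    have h1 : 0 ≤ t ^ (2 * s) := Real.rpow_nonneg ht _
    have h2 : 0 < (t ^ 2 + a) ^ ((n : ℝ) / 2) := by positivity
    exact div_nonneg h1 h2.le
  set r : ℝ := Real.sqrt a with hr
  have hrpos : 0 < r := Real.sqrt_pos.2 ha
  have hr2 : r ^ 2 = a := Real.sq_sqrt ha.le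
  have hrrpow : r = a ^ (1 / 2 : ℝ) := Real.sqrt_eq_rpow a
  have hae : (0:ℝ) < a ^ e := Real.rpow_pos_of_pos ha e
  constructor
  · -- lower bound
    set L : ℝ := r / 2 with hL
    set U : ℝ := r / Real.sqrt 2 with hU
    have hLpos : 0 < L := by positivity
    have hLU : L < U := by
      rw [hL, hU, div_lt_div_iff₀ (by norm_num) hsqrt2pos]
      nlinarith
    have hU1 : U ≤ 1 := by
      rw [hU, div_le_one hsqrt2pos]
      exact Real.sqrt_le_sqrt ha2
    have hsplit : (∫ t in (0:ℝ)..1, f t)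
        = (∫ t in (0:ℝ)..L, f t) + (∫ t in L..U, f t) + (∫ t in U..1, f t) := by
      rw [integral_add_adjacent_intervals (hint 0 L) (hint L U),
        integral_add_adjacent_intervals (hint 0 U) (hint U 1)]
    have h1 : 0 ≤ ∫ t in (0:ℝ)..L, f t := by
      apply intervalIntegral.integral_nonneg hLpos.le
      intro t ht; exact hfnn t ht.1
    have h3 : 0 ≤ ∫ t in U..1, f t := by
      apply intervalIntegral.integral_nonneg hU1
      intro t ht
      exact hfnn t (le_trans (by positivity) ht.1)
    set K : ℝ := L ^ (2 * s) / ((3 / 2 * a) ^ ((n : ℝ) / 2)) with hK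
    have h2 : (U - L) * K ≤ ∫ t in L..U, f t := by
      have hm := intervalIntegral.integral_mono_on hLU.le
        (_root_.intervalIntegrable_const (c := K)) (hint L U) ?_
      · rwa [intervalIntegral.integral_const, smul_eq_mul] at hm
      · intro t ht
        have htL : L ≤ t := ht.1
        have htpos : 0 < t := lt_of_lt_of_le hLpos htL
        have hnum : L ^ (2 * s) ≤ t ^ (2 * s) :=
          Real.rpow_le_rpow hLpos.le htL (by linarith)
        have hU2 : U ^ 2 = a / 2 := by
          rw [hU, div_pow, hr2, Real.sq_sqrt (by norm_num : (0:ℝ) ≤ 2)]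
        have ht2 : t ^ 2 + a ≤ 3 / 2 * a := by
          nlinarith [ht.2, htpos]
        have hden : (t ^ 2 + a) ^ ((n : ℝ) / 2) ≤ (3 / 2 * a) ^ ((n : ℝ) / 2) :=
          Real.rpow_le_rpow (by positivity) ht2 (by positivity)
        exact div_le_div₀ (Real.rpow_nonneg htpos.le _) hnum (by positivity) hden
    have hkey : (U - L) * K = c0 * a ^ e := by
      have h1' : (a ^ (1/2:ℝ)) ^ (2 * s) = a ^ s := by
        rw [← Real.rpow_mul ha.le]; congr 1; ring
      have hLrpow : L ^ (2 * s) = a ^ s * (2:ℝ) ^ (-(2 * s)) := by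
        rw [hL, hrrpow, Real.div_rpow (by positivity) (by norm_num : (0:ℝ) ≤ 2), h1',
          div_eq_mul_inv, ← Real.rpow_neg (by norm_num : (0:ℝ) ≤ 2)]
      have hden : ((3 / 2 * a) ^ ((n : ℝ) / 2)) = (3/2:ℝ) ^ ((n:ℝ)/2) * a ^ ((n:ℝ)/2) :=
        Real.mul_rpow (by norm_num) ha.le
      have h23 : (2 / 3 : ℝ) ^ ((n : ℝ) / 2) = ((3/2:ℝ) ^ ((n:ℝ)/2))⁻¹ := by
        rw [← Real.inv_rpow (by norm_num : (0:ℝ) ≤ 3/2)]; norm_num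
      have hUL : U - L = (1 / Real.sqrt 2 - 1 / 2) * a ^ (1/2 : ℝ) := by
        rw [hU, hL, hrrpow]; ring
      rw [hK, hLrpow, hden, hUL, hc0def, h23]
      rw [div_eq_mul_inv (a ^ s * (2:ℝ) ^ (-(2 * s))),
        mul_inv ((3/2:ℝ) ^ ((n:ℝ)/2)) (a ^ ((n:ℝ)/2)), ← Real.rpow_neg ha.le ((n:ℝ)/2)]
      have hpow : a ^ (1/2:ℝ) * (a ^ s * a ^ (-((n:ℝ)/2))) = a ^ e := by
        rw [← Real.rpow_add ha, ← Real.rpow_add ha, he]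
        congr 1; ring
      calc (1 / Real.sqrt 2 - 1 / 2) * a ^ (1/2:ℝ) *
            (a ^ s * (2:ℝ) ^ (-(2*s)) * (((3/2:ℝ) ^ ((n:ℝ)/2))⁻¹ * a ^ (-((n:ℝ)/2))))
          = (1 / Real.sqrt 2 - 1 / 2) * (2:ℝ) ^ (-(2*s)) * ((3/2:ℝ) ^ ((n:ℝ)/2))⁻¹ *
            (a ^ (1/2:ℝ) * (a ^ s * a ^ (-((n:ℝ)/2)))) := by ring
        _ = _ := by rw [hpow]
    calc min c0 C * a ^ e ≤ c0 * a ^ e :=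
          mul_le_mul_of_nonneg_right (min_le_left _ _) hae.le
      _ = (U - L) * K := hkey.symm
      _ ≤ ∫ t in L..U, f t := h2
      _ ≤ ∫ t in (0:ℝ)..1, f t := by rw [hsplit]; linarith
  · -- upper bound
    have hmonoA : ∀ b : ℝ, 0 ≤ b → (∫ t in (0:ℝ)..b, f t)
        ≤ ∫ t in (0:ℝ)..b, t ^ (2*s) / a ^ ((n:ℝ)/2) := by
      intro b hb
      apply intervalIntegral.integral_mono_on hb (hint 0 b)
        (((cont_rpow_aux (2*s) (by linarith)).div_const _).intervalIntegrable 0 b)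
      intro t ht
      apply div_le_div_of_nonneg_left (Real.rpow_nonneg ht.1 _) (by positivity)
      exact Real.rpow_le_rpow ha.le (by nlinarith [sq_nonneg t]) (by positivity)
    have hcalcA : ∀ b : ℝ, 0 < b → (∫ t in (0:ℝ)..b, t ^ (2*s) / a ^ ((n:ℝ)/2))
        = b ^ (2*s+1) / (2*s+1) * a ^ (-((n:ℝ)/2)) := by
      intro b hb
      rw [intervalIntegral.integral_div, integral_rpow (Or.inl (by linarith)),
        Real.zero_rpow (by linarith), sub_zero, Real.rpow_neg ha.le ((n:ℝ)/2),
        div_eq_mul_inv (b ^ (2*s+1) / (2*s+1))]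
    rcases le_or_gt a 1 with h1 | h1
    · -- a ≤ 1
      have hr1 : r ≤ 1 := by
        calc r ≤ Real.sqrt 1 := Real.sqrt_le_sqrt h1
          _ = 1 := Real.sqrt_one
      have hsplit : (∫ t in (0:ℝ)..1, f t)
          = (∫ t in (0:ℝ)..r, f t) + (∫ t in r..1, f t) :=
        (integral_add_adjacent_intervals (hint 0 r) (hint r 1)).symm
      have hA : (∫ t in (0:ℝ)..r, f t) ≤ a ^ e * (1 / (2*s+1)) := by
        refine le_trans (hmonoA r hrpos.le) (le_of_eq ?_)
        have hr1' : r ^ (2*s+1) = a ^ ((2*s+1)/2) := by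
          rw [hrrpow, ← Real.rpow_mul ha.le]; congr 1; ring
        rw [hcalcA r hrpos, hr1']
        have hee : (2*s+1)/2 + -((n:ℝ)/2) = e := by rw [he]; ring
        calc a ^ ((2*s+1)/2) / (2*s+1) * a ^ (-((n:ℝ)/2))
            = a ^ ((2*s+1)/2) * a ^ (-((n:ℝ)/2)) * (1/(2*s+1)) := by ring
          _ = a ^ e * (1 / (2*s+1)) := by rw [← Real.rpow_add ha, hee]
      have hB : (∫ t in r..1, f t) ≤ a ^ e * (1 / ((n:ℝ)-1-2*s)) := by
        have hcont2 : ContinuousOn (fun t : ℝ => t ^ (2*s - n)) (Set.uIcc r 1) := by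
          intro x hx
          rw [Set.uIcc_of_le hr1] at hx
          have hx0 : 0 < x := lt_of_lt_of_le hrpos hx.1
          exact (Real.continuousAt_rpow_const x _ (Or.inl hx0.ne')).continuousWithinAt
        have hmono : (∫ t in r..1, f t) ≤ ∫ t in r..1, t ^ (2*s - n) := by
          apply intervalIntegral.integral_mono_on hr1 (hint r 1)
            (hcont2.intervalIntegrable)
          intro t ht
          have htpos : 0 < t := lt_of_lt_of_le hrpos ht.1
          have hnn : t ^ ((n:ℕ):ℝ) ≤ (t ^ 2 + a) ^ ((n:ℝ)/2) := by
            have heq : t ^ ((n:ℕ):ℝ) = (t ^ 2) ^ ((n:ℝ)/2) := by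
              rw [← Real.rpow_natCast t 2, ← Real.rpow_mul htpos.le]
              congr 1; ring
            rw [heq]
            exact Real.rpow_le_rpow (by positivity) (by linarith [ha.le]) (by positivity)
          have : f t ≤ t ^ (2*s) / t ^ ((n:ℕ):ℝ) := by
            apply div_le_div_of_nonneg_left (Real.rpow_nonneg htpos.le _)
              (by positivity) hnn
          rw [Real.rpow_sub htpos]
          exact this
        have hrp : r ^ (2*s - (n:ℝ) + 1) = a ^ e := by
          rw [hrrpow, ← Real.rpow_mul ha.le]
          congr 1; rw [he]; ring
        have hcalc : (∫ t in r..1, t ^ (2*s - n)) = (1 - a ^ e) / (2*s - n + 1) := by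
          rw [integral_rpow (Or.inr ⟨by intro hcon; linarith,
            Set.notMem_uIcc_of_lt hrpos one_pos⟩), Real.one_rpow, hrp]
        have hfin : (1 - a ^ e) / (2*s - (n:ℝ) + 1) ≤ a ^ e * (1 / ((n:ℝ)-1-2*s)) := by
          rw [div_le_iff_of_neg (by linarith : 2*s - (n:ℝ) + 1 < 0)]
          have hD : ((n:ℝ)-1-2*s) ≠ 0 := ne_of_gt hns
          have hmul : a ^ e * (1 / ((n:ℝ)-1-2*s)) * (2*s - (n:ℝ) + 1) = -(a ^ e) := by
            field_simp
            ring
          rw [hmul]; linarith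
        calc (∫ t in r..1, f t) ≤ ∫ t in r..1, t ^ (2*s - n) := hmono
          _ = (1 - a ^ e) / (2*s - n + 1) := hcalc
          _ ≤ a ^ e * (1 / ((n:ℝ)-1-2*s)) := hfin
      calc (∫ t in (0:ℝ)..1, f t)
          = (∫ t in (0:ℝ)..r, f t) + (∫ t in r..1, f t) := hsplit
        _ ≤ a ^ e * (1 / (2*s+1)) + a ^ e * (1 / ((n:ℝ)-1-2*s)) := add_le_add hA hB
        _ = C * a ^ e := by rw [hC]; ring
    · -- 1 < a
      have hstep : (∫ t in (0:ℝ)..1, f t) ≤ 1 / (2*s+1) * a ^ (-((n:ℝ)/2)) := by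
        refine le_trans (hmonoA 1 zero_le_one) (le_of_eq ?_)
        rw [hcalcA 1 one_pos, Real.one_rpow]
      have hexp : a ^ (-((n:ℝ)/2)) ≤ a ^ e :=
        Real.rpow_le_rpow_of_exponent_le h1.le (by rw [he]; linarith)
      have hCge : 1 / (2*s+1) ≤ C := by
        rw [hC]
        have : 0 < 1 / ((n:ℝ)-1-2*s) := by positivity
        linarith
      calc (∫ t in (0:ℝ)..1, f t) ≤ 1 / (2*s+1) * a ^ (-((n:ℝ)/2)) := hstep
        _ ≤ 1 / (2*s+1) * a ^ e := by
            apply mul_le_mul_of_nonneg_left hexp (by positivity)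
        _ ≤ C * a ^ e := mul_le_mul_of_nonneg_right hCge hae.le
end

section
/- Let n ≥ 2. There exist constants 0 < c ≤ C, depending only on n, such that for every 0 < a ≤ 2: c ln(1 + a^{-n/2}) ≤ ∫_0^1 t^{n-1}/(t² + a)^{n/2} dt ≤ C ln(1 + a^{-n/2}). -/
/-!
Split `[0, 1]` at `√a`. On `[0, √a]` the integrand is at most `t^(n-1) / a^(n/2)`, which
integrates to at most `1/n`; on `[√a, 1]` we have `t² ≤ t² + a ≤ 2t²`, so the integrand is
comparable to `1/t` and contributes `log (1/√a)`. Together with the lower bound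
`t^(n-1) / 3^(n/2)` on all of `[0, 1]`, this makes the integral comparable to `1 + log⁺ a⁻¹`
uniformly for `0 < a ≤ 2`, and so is `log (1 + a^(-n/2))`, being squeezed between
`log⁺ a^(-n/2)` and `log 2 + log⁺ a^(-n/2)` and bounded below by its value at `a = 2`.
-/

open Real Set Filter Asymptotics MeasureTheory intervalIntegral

theorem Real.posLog_rpow {x : ℝ} (hx : 0 ≤ x) {y : ℝ} (hy : 0 ≤ y) :
    log⁺ (x ^ y) = y * log⁺ x := by
  rcases le_total x 1 with hx1 | hx1
  · rw [(posLog_eq_zero_iff _).2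
        (by rw [abs_of_nonneg (rpow_nonneg hx _)]; exact rpow_le_one hx hx1 hy),
      (posLog_eq_zero_iff _).2 (by rwa [abs_of_nonneg hx]), mul_zero]
  · rw [posLog_eq_log (by rw [abs_of_nonneg (by positivity)]; exact one_le_rpow hx1 hy),
      posLog_eq_log (by rwa [abs_of_nonneg hx]), log_rpow (by linarith)]

theorem Real.posLog_le_log_one_add {x : ℝ} (hx : 0 ≤ x) : log⁺ x ≤ log (1 + x) := by
  rw [← posLog_eq_log (by rw [abs_of_nonneg (by positivity)]; linarith)]
  exact posLog_le_posLog hx (by linarith)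

theorem Real.log_one_add_le_log_two_add_posLog {x : ℝ} (hx : 0 ≤ x) :
    log (1 + x) ≤ log 2 + log⁺ x := by
  rw [← posLog_eq_log (by rw [abs_of_nonneg (by positivity)]; linarith)]
  simpa using posLog_add (x := 1) (y := x)

theorem Real.neg_log_sqrt_eq_posLog_inv_div_two {a : ℝ} (ha : 0 < a) (ha1 : a ≤ 1) :
    -log √a = log⁺ a⁻¹ / 2 := by
  rw [log_sqrt ha.le,
    posLog_eq_log (by rw [abs_of_pos (inv_pos.2 ha)]; exact (one_le_inv₀ ha).2 ha1), log_inv]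
  ring

section Comparison

variable {α : Type*} {s : Set α} {f g : α → ℝ}

theorem Asymptotics.isBigO_principal_of_le (C : ℝ) (hf : ∀ x ∈ s, 0 ≤ f x)
    (h : ∀ x ∈ s, f x ≤ C * g x) : f =O[𝓟 s] g :=
  isBigO_principal.2 ⟨|C|, fun x hx => by
    rw [norm_of_nonneg (hf x hx), norm_eq_abs, ← abs_mul]
    exact (h x hx).trans (le_abs_self _)⟩

theorem Asymptotics.IsTheta.exists_pos_mul_le_and_le_mul (h : f =Θ[𝓟 s] g)
    (hf : ∀ x ∈ s, 0 ≤ f x) (hg : ∀ x ∈ s, 0 ≤ g x) :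
    ∃ c C : ℝ, 0 < c ∧ ∀ x ∈ s, c * g x ≤ f x ∧ f x ≤ C * g x := by
  obtain ⟨C, -, hC⟩ := h.1.exists_pos
  obtain ⟨c, hc, hc'⟩ := h.2.exists_pos
  rw [isBigOWith_principal] at hC hc'
  refine ⟨c⁻¹, C, inv_pos.2 hc, fun x hx => ⟨?_, ?_⟩⟩
  · simpa [inv_mul_le_iff₀ hc, norm_of_nonneg (hg x hx), norm_of_nonneg (hf x hx)] using hc' x hx
  · simpa [norm_of_nonneg (hg x hx), norm_of_nonneg (hf x hx)] using hC x hx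

end Comparison

noncomputable def radialIntegrand (p a t : ℝ) : ℝ := t ^ (p - 1) / (t ^ 2 + a) ^ (p / 2)

section RadialIntegrand

variable {p a t : ℝ}

theorem continuous_radialIntegrand (hp : 1 ≤ p) (ha : 0 < a) :
    Continuous (radialIntegrand p a) :=
  (continuous_id.rpow_const fun _ => Or.inr (by linarith)).div
    (((continuous_pow 2).add continuous_const).rpow_const
      fun t => Or.inl (by positivity : t ^ 2 + a ≠ 0))
    fun _ => (rpow_pos_of_pos (by positivity) _).ne'

theorem intervalIntegrable_radialIntegrand (hp : 1 ≤ p) (ha : 0 < a) (u v : ℝ) :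
    IntervalIntegrable (radialIntegrand p a) volume u v :=
  (continuous_radialIntegrand hp ha).intervalIntegrable u v

theorem radialIntegrand_nonneg (ha : 0 ≤ a) (ht : 0 ≤ t) : 0 ≤ radialIntegrand p a t :=
  div_nonneg (rpow_nonneg ht _) (rpow_nonneg (by positivity) _)

theorem radialIntegrand_le_of_le (hp : 0 ≤ p) (ht : 0 ≤ t) {K : ℝ} (hK : 0 < K)
    (hKt : K ≤ t ^ 2 + a) : radialIntegrand p a t ≤ t ^ (p - 1) / K ^ (p / 2) :=
  div_le_div_of_nonneg_left (rpow_nonneg ht _) (rpow_pos_of_pos hK _)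
    (rpow_le_rpow hK.le hKt (by positivity))

theorem le_radialIntegrand_of_le (hp : 0 ≤ p) (ha : 0 < a) (ht : 0 ≤ t) {K : ℝ}
    (hKt : t ^ 2 + a ≤ K) : t ^ (p - 1) / K ^ (p / 2) ≤ radialIntegrand p a t :=
  div_le_div_of_nonneg_left (rpow_nonneg ht _) (rpow_pos_of_pos (by positivity) _)
    (rpow_le_rpow (by positivity) hKt (by positivity))

theorem rpow_sub_one_div_mul_sq_rpow (ht : 0 < t) {c : ℝ} (hc : 0 ≤ c) (p : ℝ) :
    t ^ (p - 1) / (c * t ^ 2) ^ (p / 2) = (c ^ (p / 2))⁻¹ * t⁻¹ := by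
  have hsq : (t ^ 2) ^ (p / 2) = t ^ p := by
    rw [← rpow_natCast, ← rpow_mul ht.le]; ring_nf
  rw [mul_rpow hc (by positivity), hsq, rpow_sub_one ht.ne']
  field_simp

theorem integral_rpow_sub_one (hp : 0 < p) (m : ℝ) :
    ∫ t in (0)..m, t ^ (p - 1) = m ^ p / p := by
  rw [integral_rpow (Or.inl (by linarith)), sub_add_cancel, zero_rpow hp.ne', sub_zero]

theorem integral_radialIntegrand_le_of_le_sqrt (hp : 1 ≤ p) (ha : 0 < a) {m : ℝ} (hm : 0 ≤ m)
    (hma : m ≤ √a) : ∫ t in (0)..m, radialIntegrand p a t ≤ 1 / p := by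
  have hmp : m ^ p ≤ a ^ (p / 2) := by
    calc m ^ p ≤ √a ^ p := rpow_le_rpow hm hma (by linarith)
      _ = a ^ (p / 2) := by rw [sqrt_eq_rpow, ← rpow_mul ha.le]; ring_nf
  calc ∫ t in (0)..m, radialIntegrand p a t ≤ ∫ t in (0)..m, t ^ (p - 1) / a ^ (p / 2) :=
        integral_mono_on hm (intervalIntegrable_radialIntegrand hp ha 0 m)
          ((intervalIntegral.intervalIntegrable_rpow' (by linarith)).div_const _)
          fun t ht => radialIntegrand_le_of_le (by linarith) ht.1 ha (by nlinarith)
    _ = m ^ p / a ^ (p / 2) / p := by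
        rw [intervalIntegral.integral_div, integral_rpow_sub_one (by linarith)]; ring
    _ ≤ 1 / p := by
        gcongr
        exact div_le_one_of_le₀ hmp (by positivity)

theorem integral_radialIntegrand_le_neg_log (hp : 1 ≤ p) (ha : 0 < a) {m : ℝ} (hm : 0 < m)
    (hm1 : m ≤ 1) : ∫ t in m..1, radialIntegrand p a t ≤ -log m := by
  calc ∫ t in m..1, radialIntegrand p a t ≤ ∫ t in m..1, t⁻¹ :=
        integral_mono_on hm1 (intervalIntegrable_radialIntegrand hp ha m 1)
          (intervalIntegrable_inv (fun t ht => ?_) continuousOn_id) fun t ht => ?_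
    _ = -log m := by rw [integral_inv_of_pos hm one_pos, one_div, log_inv]
  · exact ((lt_min hm one_pos).trans_le ht.1).ne'
  · have ht0 : 0 < t := hm.trans_le ht.1
    calc radialIntegrand p a t ≤ t ^ (p - 1) / (1 * t ^ 2) ^ (p / 2) :=
          radialIntegrand_le_of_le (by linarith) ht0.le (by positivity) (by linarith)
      _ = t⁻¹ := by rw [rpow_sub_one_div_mul_sq_rpow ht0 zero_le_one, one_rpow, inv_one, one_mul]

theorem integral_radialIntegrand_nonneg (ha : 0 ≤ a) {m : ℝ} (hm : 0 ≤ m) :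
    0 ≤ ∫ t in (0)..m, radialIntegrand p a t :=
  integral_nonneg hm fun _ ht => radialIntegrand_nonneg ha ht.1

theorem integral_radialIntegrand_le (hp : 1 ≤ p) (ha : 0 < a) :
    ∫ t in (0)..1, radialIntegrand p a t ≤ 1 / p + log⁺ a⁻¹ / 2 := by
  rcases le_or_gt a 1 with ha1 | ha1
  · have hsa : √a ≤ 1 := sqrt_le_one.2 ha1
    rw [← integral_add_adjacent_intervals (intervalIntegrable_radialIntegrand hp ha 0 √a)
      (intervalIntegrable_radialIntegrand hp ha _ 1), ← neg_log_sqrt_eq_posLog_inv_div_two ha ha1]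
    exact add_le_add (integral_radialIntegrand_le_of_le_sqrt hp ha (sqrt_nonneg a) le_rfl)
      (integral_radialIntegrand_le_neg_log hp ha (sqrt_pos.2 ha) hsa)
  · have := integral_radialIntegrand_le_of_le_sqrt hp ha zero_le_one (one_le_sqrt.2 ha1.le)
    linarith [posLog_nonneg (x := a⁻¹)]

theorem one_le_mul_integral_radialIntegrand (hp : 1 ≤ p) (ha : 0 < a) (ha2 : a ≤ 2) :
    1 ≤ p * 3 ^ (p / 2) * ∫ t in (0)..1, radialIntegrand p a t := by
  have hlow :
      ∫ t in (0)..1, t ^ (p - 1) / 3 ^ (p / 2) ≤ ∫ t in (0)..1, radialIntegrand p a t :=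
    integral_mono_on zero_le_one
      ((intervalIntegral.intervalIntegrable_rpow' (by linarith)).div_const _)
      (intervalIntegrable_radialIntegrand hp ha 0 1)
      fun t ht => le_radialIntegrand_of_le (by linarith) ha ht.1 (by nlinarith [ht.1, ht.2])
  rw [intervalIntegral.integral_div, integral_rpow_sub_one (by linarith), one_rpow,
    div_div, div_le_iff₀ (by positivity)] at hlow
  linarith

theorem neg_log_sqrt_le_mul_integral_radialIntegrand (hp : 1 ≤ p) (ha : 0 < a) (ha1 : a ≤ 1) :
    -log √a ≤ 2 ^ (p / 2) * ∫ t in √a..1, radialIntegrand p a t := by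
  have hsa : 0 < √a := sqrt_pos.2 ha
  have hlow :
      ∫ t in √a..1, (2 ^ (p / 2))⁻¹ * t⁻¹ ≤ ∫ t in √a..1, radialIntegrand p a t :=
    integral_mono_on (sqrt_le_one.2 ha1)
      ((intervalIntegrable_inv (fun t ht => ((lt_min hsa one_pos).trans_le ht.1).ne')
        continuousOn_id).const_mul _)
      (intervalIntegrable_radialIntegrand hp ha _ 1) fun t ht => by
        have ht0 : 0 < t := hsa.trans_le ht.1
        have hat : a ≤ t ^ 2 := by nlinarith [sq_sqrt ha.le, ht.1]
        rw [← rpow_sub_one_div_mul_sq_rpow ht0 zero_le_two]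
        exact le_radialIntegrand_of_le (by linarith) ha ht0.le (by linarith)
  rw [intervalIntegral.integral_const_mul, integral_inv_of_pos hsa one_pos, one_div, log_inv,
    inv_mul_le_iff₀ (by positivity)] at hlow
  exact hlow

theorem posLog_inv_le_mul_integral_radialIntegrand (hp : 1 ≤ p) (ha : 0 < a) :
    log⁺ a⁻¹ ≤ 2 * 2 ^ (p / 2) * ∫ t in (0)..1, radialIntegrand p a t := by
  rcases le_or_gt a 1 with ha1 | ha1
  · have hhead := integral_radialIntegrand_nonneg (p := p) ha.le (sqrt_nonneg a)
    have htail := neg_log_sqrt_le_mul_integral_radialIntegrand hp ha ha1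
    rw [neg_log_sqrt_eq_posLog_inv_div_two ha ha1] at htail
    rw [← integral_add_adjacent_intervals (intervalIntegrable_radialIntegrand hp ha 0 √a)
      (intervalIntegrable_radialIntegrand hp ha _ 1)]
    nlinarith [rpow_pos_of_pos two_pos (p / 2)]
  · rw [(posLog_eq_zero_iff _).2
      (by rw [abs_of_pos (inv_pos.2 ha)]; exact inv_le_one_of_one_le₀ ha1.le)]
    have := integral_radialIntegrand_nonneg (p := p) ha.le zero_le_one
    positivity

end RadialIntegrand

theorem isTheta_integral_radialIntegrand {p : ℝ} (hp : 1 ≤ p) :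
    (fun a => ∫ t in (0)..1, radialIntegrand p a t) =Θ[𝓟 (Ioc 0 2)]
      fun a => 1 + log⁺ a⁻¹ := by
  refine ⟨isBigO_principal_of_le 1
      (fun a ha => integral_radialIntegrand_nonneg ha.1.le zero_le_one) fun a ha => ?_,
    isBigO_principal_of_le (p * 3 ^ (p / 2) + 2 * 2 ^ (p / 2))
      (fun _ _ => add_nonneg zero_le_one posLog_nonneg) fun a ha => ?_⟩
  · have h1p : 1 / p ≤ 1 := div_le_one_of_le₀ hp (by linarith)
    linarith [integral_radialIntegrand_le hp ha.1, posLog_nonneg (x := a⁻¹)]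
  · rw [add_mul]
    exact add_le_add (one_le_mul_integral_radialIntegrand hp ha.1 ha.2)
      (posLog_inv_le_mul_integral_radialIntegrand hp ha.1)

theorem isTheta_log_one_add_rpow {p : ℝ} (hp : 0 < p) :
    (fun a : ℝ => log (1 + a ^ (-p / 2))) =Θ[𝓟 (Ioc 0 2)] fun a => 1 + log⁺ a⁻¹ := by
  have hpos : ∀ a ∈ Ioc (0 : ℝ) 2, 0 < a ^ (-p / 2) := fun a ha => rpow_pos_of_pos ha.1 _
  have hposLog : ∀ a ∈ Ioc (0 : ℝ) 2, log⁺ (a ^ (-p / 2)) = p / 2 * log⁺ a⁻¹ :=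
    fun a ha => by
    rw [neg_div, rpow_neg ha.1.le, ← inv_rpow ha.1.le, posLog_rpow (inv_nonneg.2 ha.1.le)
      (by positivity)]
  have hlog0 : 0 < log (1 + 2 ^ (-p / 2)) :=
    log_pos (by linarith [rpow_pos_of_pos two_pos (-p / 2)])
  have hlow : ∀ a ∈ Ioc (0 : ℝ) 2, log (1 + 2 ^ (-p / 2)) ≤ log (1 + a ^ (-p / 2)) :=
    fun a ha => log_le_log (by positivity) (by
      linarith [rpow_le_rpow_of_nonpos ha.1 ha.2 (by linarith : -p / 2 ≤ 0)])
  refine ⟨isBigO_principal_of_le (1 + p / 2) (fun a ha => log_nonneg (by linarith [hpos a ha]))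
      fun a ha => ?_, isBigO_principal_of_le ((log (1 + 2 ^ (-p / 2)))⁻¹ + 2 / p)
      (fun _ _ => add_nonneg zero_le_one posLog_nonneg) fun a ha => ?_⟩
  · have := log_one_add_le_log_two_add_posLog (hpos a ha).le
    rw [hposLog a ha] at this
    nlinarith [log_two_lt_d9, posLog_nonneg (x := a⁻¹)]
  · have hlog := posLog_le_log_one_add (hpos a ha).le
    rw [hposLog a ha] at hlog
    rw [add_mul, ← div_eq_inv_mul]
    refine add_le_add ((one_le_div hlog0).2 (hlow a ha)) ?_
    rw [div_mul_eq_mul_div, le_div_iff₀ hp]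
    linarith

theorem stmt17 (n : ℕ) (hn : 2 ≤ n) :
    ∃ c C : ℝ, 0 < c ∧ c ≤ C ∧ ∀ a : ℝ, 0 < a → a ≤ 2 →
      (c * Real.log (1 + a ^ (-(n : ℝ) / 2)) ≤
          ∫ t in (0 : ℝ)..1, t ^ ((n : ℝ) - 1) / (t ^ 2 + a) ^ ((n : ℝ) / 2)) ∧
      (∫ t in (0 : ℝ)..1, t ^ ((n : ℝ) - 1) / (t ^ 2 + a) ^ ((n : ℝ) / 2)) ≤
        C * Real.log (1 + a ^ (-(n : ℝ) / 2)) := by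
  have hp : (1 : ℝ) ≤ n := by exact_mod_cast one_le_two.trans hn
  obtain ⟨c, C, hc, hbounds⟩ :=
    ((isTheta_integral_radialIntegrand hp).trans (isTheta_log_one_add_rpow (by linarith)).symm)
      |>.exists_pos_mul_le_and_le_mul
      (fun a ha => integral_radialIntegrand_nonneg ha.1.le zero_le_one)
      fun a ha => log_nonneg (by linarith [rpow_pos_of_pos ha.1 (-(n : ℝ) / 2)])
  refine ⟨c, C, hc, ?_, fun a ha ha2 => hbounds a ⟨ha, ha2⟩⟩
  obtain ⟨hlow, hup⟩ := hbounds 1 ⟨one_pos, one_le_two⟩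
  have hlog2 : 0 < log (1 + (1 : ℝ) ^ (-(n : ℝ) / 2)) := by norm_num [log_pos]
  exact le_of_mul_le_mul_right (hlow.trans hup) hlog2
end

section
/- Let n ≥ 2 and ε > 0. There exist constants 0 < c ≤ C, depending only on n and ε, such that for every 0 < a ≤ 2: c ≤ ∫_0^1 t^{n-1+ε}/(t² + a)^{n/2} dt ≤ C. -/
/-! For `0 < t ≤ 1` and `0 < a ≤ 2` the denominator `(t² + a)^{n/2}` lies between `t^n` and
`3^{n/2}`, so the integrand is squeezed between `t^{n-1+ε} / 3^{n/2}` and `t^{ε-1}`, whose integrals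
over `[0, 1]` are positive constants independent of `a`. -/

open MeasureTheory intervalIntegral

section

variable {p q a t : ℝ}

lemma rpow_div_rpow_sq_add_le_rpow (ht : 0 < t) (ha : 0 ≤ a) (hq : 0 ≤ q) :
    t ^ p / (t ^ 2 + a) ^ q ≤ t ^ (p - 2 * q) := by
  calc t ^ p / (t ^ 2 + a) ^ q ≤ t ^ p / (t ^ 2) ^ q := by
        gcongr
        linarith
    _ = t ^ (p - 2 * q) := by
        rw [← Real.rpow_natCast, ← Real.rpow_mul ht.le, ← Real.rpow_sub ht]
        norm_num

lemma rpow_div_three_rpow_le (ht₀ : 0 ≤ t) (ht₁ : t ≤ 1) (ha₀ : 0 < a) (ha₂ : a ≤ 2)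
    (hq : 0 ≤ q) : t ^ p / 3 ^ q ≤ t ^ p / (t ^ 2 + a) ^ q := by
  gcongr
  nlinarith

lemma intervalIntegrable_rpow_div_rpow_sq_add (hpq : -1 < p - 2 * q) (ha : 0 ≤ a)
    (hq : 0 ≤ q) :
    IntervalIntegrable (fun t => t ^ p / (t ^ 2 + a) ^ q) volume 0 1 := by
  refine (intervalIntegrable_rpow' hpq).mono_fun ?_ ?_
  · exact ((measurable_id.pow_const p).div
      (((measurable_id.pow_const 2).add_const a).pow_const q)).aestronglyMeasurable
  · rw [Set.uIoc_of_le zero_le_one]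
    refine (ae_restrict_mem measurableSet_Ioc).mono fun t ht => ?_
    have ht₀ : 0 < t := ht.1
    dsimp only
    rw [Real.norm_of_nonneg (by positivity), Real.norm_of_nonneg (by positivity)]
    exact rpow_div_rpow_sq_add_le_rpow ht₀ ha hq

lemma integral_rpow_div_rpow_sq_add_le (hpq : -1 < p - 2 * q) (ha : 0 ≤ a) (hq : 0 ≤ q) :
    ∫ t in (0 : ℝ)..1, t ^ p / (t ^ 2 + a) ^ q ≤ 1 / (p - 2 * q + 1) := by
  calc ∫ t in (0 : ℝ)..1, t ^ p / (t ^ 2 + a) ^ q ≤ ∫ t in (0 : ℝ)..1, t ^ (p - 2 * q) :=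
        integral_mono_on_of_le_Ioo zero_le_one
          (intervalIntegrable_rpow_div_rpow_sq_add hpq ha hq) (intervalIntegrable_rpow' hpq)
          fun t ht => rpow_div_rpow_sq_add_le_rpow ht.1 ha hq
    _ = 1 / (p - 2 * q + 1) := by
        rw [integral_rpow (Or.inl hpq), Real.one_rpow, Real.zero_rpow (by linarith), sub_zero]

lemma le_integral_rpow_div_rpow_sq_add (hpq : -1 < p - 2 * q) (ha₀ : 0 < a) (ha₂ : a ≤ 2)
    (hq : 0 ≤ q) :
    1 / ((p + 1) * 3 ^ q) ≤ ∫ t in (0 : ℝ)..1, t ^ p / (t ^ 2 + a) ^ q := by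
  have hp : -1 < p := by linarith
  calc 1 / ((p + 1) * 3 ^ q) = ∫ t in (0 : ℝ)..1, t ^ p / 3 ^ q := by
        rw [intervalIntegral.integral_div, integral_rpow (Or.inl hp), Real.one_rpow,
          Real.zero_rpow (by linarith), sub_zero, div_div]
    _ ≤ ∫ t in (0 : ℝ)..1, t ^ p / (t ^ 2 + a) ^ q :=
        integral_mono_on zero_le_one ((intervalIntegrable_rpow' hp).div_const _)
          (intervalIntegrable_rpow_div_rpow_sq_add hpq ha₀.le hq)
          fun t ht => rpow_div_three_rpow_le ht.1 ht.2 ha₀ ha₂ hq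

end

theorem stmt18_general (n : ℕ) (ε : ℝ) (hε : 0 < ε) :
    ∃ c C : ℝ, 0 < c ∧ c ≤ C ∧ ∀ a : ℝ, 0 < a → a ≤ 2 →
      (c ≤ ∫ t in (0 : ℝ)..1, t ^ ((n : ℝ) - 1 + ε) / (t ^ 2 + a) ^ ((n : ℝ) / 2)) ∧
      (∫ t in (0 : ℝ)..1, t ^ ((n : ℝ) - 1 + ε) / (t ^ 2 + a) ^ ((n : ℝ) / 2)) ≤ C := by
  set p : ℝ := (n : ℝ) - 1 + ε
  set q : ℝ := (n : ℝ) / 2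
  have hpq : p - 2 * q = ε - 1 := by ring
  have hq : 0 ≤ q := by positivity
  have bounds : ∀ a : ℝ, 0 < a → a ≤ 2 →
      1 / ((p + 1) * 3 ^ q) ≤ ∫ t in (0 : ℝ)..1, t ^ p / (t ^ 2 + a) ^ q ∧
      ∫ t in (0 : ℝ)..1, t ^ p / (t ^ 2 + a) ^ q ≤ 1 / ε := fun a ha ha₂ => by
    have hpq' : -1 < p - 2 * q := by linarith
    refine ⟨le_integral_rpow_div_rpow_sq_add hpq' ha ha₂ hq, ?_⟩
    simpa [hpq] using integral_rpow_div_rpow_sq_add_le hpq' ha.le hq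
  have hp : 0 < p + 1 := by rw [show p + 1 = n + ε by ring]; positivity
  refine ⟨1 / ((p + 1) * 3 ^ q), 1 / ε, by positivity, ?_, bounds⟩
  exact ((bounds 1 one_pos one_le_two).1).trans (bounds 1 one_pos one_le_two).2

theorem stmt18 (n : ℕ) (hn : 2 ≤ n) (ε : ℝ) (hε : 0 < ε) :
    ∃ c C : ℝ, 0 < c ∧ c ≤ C ∧ ∀ a : ℝ, 0 < a → a ≤ 2 →
      (c ≤ ∫ t in (0 : ℝ)..1, t ^ ((n : ℝ) - 1 + ε) / (t ^ 2 + a) ^ ((n : ℝ) / 2)) ∧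
      (∫ t in (0 : ℝ)..1, t ^ ((n : ℝ) - 1 + ε) / (t ^ 2 + a) ^ ((n : ℝ) / 2)) ≤ C :=
  stmt18_general n ε hε
end
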